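/- arXiv:2205.13315 — 5 statements merged into one kernel-verified Lean document; each statement's English description precedes it below -/
import Mathlib

section
/- Let m be a natural number, Δ > 0, a ∈ ℝ, and c ∈ ℝ. If p is a real polynomial of degree at most m such that the average of p over each of the m+1 consecutive intervals [a+kΔ, a+(k+1)Δ], k = 0,…,m, equals c (i.e. ∫_{a+kΔ}^{a+(k+1)Δ} p(x) dx = cΔ for every k ∈ {0,…,m}), then p is identically equal to the constant c. -/
/-!
Let `F` be an antiderivative of `p - c`. It has degree at most `m + 1`, and since every
integral of `p - c` over `[a + kΔ, a + (k+1)Δ]` vanishes, `F` takes the same value at the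
`m + 2` grid points `a + kΔ`, `k = 0, …, m + 1`. Hence `F` is constant and `p - c = F' = 0`.
-/

open Polynomial Finset

namespace Polynomial

section Antiderivative

variable {K : Type*} [Field K]

noncomputable def antiderivative (p : K[X]) : K[X] :=
  ∑ i ∈ range (p.natDegree + 1), monomial (i + 1) (p.coeff i / (i + 1))

theorem derivative_antiderivative [CharZero K] (p : K[X]) :
    derivative (antiderivative p) = p := by
  conv_rhs => rw [p.as_sum_range' (p.natDegree + 1) (lt_add_one _)]
  rw [antiderivative, map_sum]
  refine sum_congr rfl fun i _ => ?_
  rw [derivative_monomial, Nat.add_sub_cancel]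
  push_cast
  rw [div_mul_cancel₀ _ (Nat.cast_add_one_ne_zero i)]

theorem natDegree_antiderivative_le (p : K[X]) :
    (antiderivative p).natDegree ≤ p.natDegree + 1 :=
  natDegree_sum_le_of_forall_le _ _ fun _ hi =>
    (natDegree_monomial_le _).trans (Nat.succ_le_succ (mem_range_succ_iff.mp hi))

end Antiderivative

theorem eq_C_of_natDegree_le_of_eval_add_mul_eq {R : Type*} [CommRing R] [IsDomain R]
    [CharZero R] {f : R[X]} {n : ℕ} (hf : f.natDegree ≤ n) {a d : R} (hd : d ≠ 0)
    (h : ∀ k < n, f.eval (a + (k + 1) * d) = f.eval (a + k * d)) : f = C (f.eval a) := by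
  have hconst : ∀ k ≤ n, f.eval (a + k * d) = f.eval a := by
    intro k hk
    induction k with
    | zero => simp
    | succ k ih => rw [Nat.cast_succ, h k hk, ih (k.le_succ.trans hk)]
  have hinj : Function.Injective fun i : Fin (n + 1) => a + (i : ℕ) * d := fun i j hij =>
    Fin.ext (by simpa [hd] using hij)
  rw [← sub_eq_zero]
  refine eq_zero_of_natDegree_lt_card_of_eval_eq_zero _ hinj (fun i => ?_) ?_
  · simp [hconst i (Nat.lt_succ_iff.mp i.isLt)]
  · rw [Fintype.card_fin, natDegree_sub_C]
    exact Nat.lt_succ_of_le hf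

theorem integral_eval_eq_eval_antiderivative_sub (p : ℝ[X]) (u v : ℝ) :
    ∫ x in u..v, p.eval x = (antiderivative p).eval v - (antiderivative p).eval u :=
  intervalIntegral.integral_eq_sub_of_hasDerivAt
    (fun x _ => by simpa only [derivative_antiderivative] using (antiderivative p).hasDerivAt x)
    (p.continuous.intervalIntegrable u v)

end Polynomial

/-- A real polynomial of degree at most `m` whose averages over the `m+1`
consecutive intervals `[a + kΔ, a + (k+1)Δ]`, `k = 0, …, m`, all equal `c`
(i.e. each integral equals `c * Δ`) is identically the constant `c`. -/
theorem stmt_0 (m : ℕ) (Δ : ℝ) (hΔ : 0 < Δ) (a c : ℝ) (p : Polynomial ℝ)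
    (hdeg : p.degree ≤ (m : ℕ)) 
    (havg : ∀ k : ℕ, k ≤ m →
      (∫ x in (a + k * Δ)..(a + (k + 1) * Δ), p.eval x) = c * Δ) :
    p = Polynomial.C c := by
  set F := antiderivative p - C c * X
  have hF_deg : F.natDegree ≤ m + 1 := by
    refine (natDegree_sub_le _ _).trans (max_le ?_ ?_)
    · exact (natDegree_antiderivative_le p).trans
        (by gcongr; exact natDegree_le_iff_degree_le.2 hdeg)
    · exact (natDegree_C_mul_le c X).trans (by simp)
  have hF_step : ∀ k < m + 1, F.eval (a + (k + 1) * Δ) = F.eval (a + k * Δ) := by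
    intro k hk
    have hk := havg k (Nat.lt_succ_iff.mp hk)
    rw [integral_eval_eq_eval_antiderivative_sub] at hk
    simp only [F, eval_sub, eval_mul, eval_C, eval_X]
    linear_combination hk
  have hF := congrArg derivative (eq_C_of_natDegree_le_of_eval_add_mul_eq hF_deg hΔ.ne' hF_step)
  simpa [F, derivative_antiderivative, sub_eq_zero] using hF
end

section
/- Let g, η₀ ∈ ℝ and let (bᴸᵢ)_{i∈ℕ} and (bᴿᵢ)_{i∈ℕ} be real sequences (bᴿᵢ is the bathymetry value at the right side of the left interface of cell i, bᴸᵢ at the left side of its right interface). Define R : ℕ → ℝ by R₀ = 0 and R_{i+1} = Rᵢ + gη₀(bᴸᵢ − bᴿᵢ) − g((bᴸᵢ)² − (bᴿᵢ)²)/2 + gη₀(bᴿ_{i+1} − bᴸᵢ) − g((bᴿ_{i+1})² − (bᴸᵢ)²)/2, and define Kᵢ := Rᵢ + gη₀²/2 − gη₀·bᴿᵢ + g(bᴿᵢ)²/2. Then Kᵢ = K₀ for every i ∈ ℕ; that is, the cell values of the global flux are constant across all cells. -/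
theorem stmt_3_general (g η₀ : ℝ) (bL bR : ℕ → ℝ) (R : ℕ → ℝ)
    (hRrec : ∀ i : ℕ,
      R (i + 1) = R i + g * η₀ * (bL i - bR i) - g * ((bL i) ^ 2 - (bR i) ^ 2) / 2
        + g * η₀ * (bR (i + 1) - bL i) - g * ((bR (i + 1)) ^ 2 - (bL i) ^ 2) / 2)
    (K : ℕ → ℝ)
    (hK : ∀ i : ℕ,
      K i = R i + g * η₀ ^ 2 / 2 - g * η₀ * bR i + g * (bR i) ^ 2 / 2) :
    ∀ i : ℕ, K i = K 0 := by
  -- The `bL i` terms cancel between the two halves of the recursion, leaving exactly the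
  -- change of `gη₀bᴿ − g(bᴿ)²/2` from cell `i` to cell `i + 1`.
  have hstep : ∀ i, K (i + 1) = K i := fun i => by
    rw [hK, hK, hRrec]
    ring
  intro i
  induction i with
  | zero => rfl
  | succ n ih => rw [hstep, ih]

/-- Telescoping identity for the lake-at-rest state: with the recursive definition of the
source integrals `Rᵢ` (left-interface values plus interface jumps), the cell values of the
global flux `Kᵢ = Rᵢ + gη₀²/2 − gη₀bᴿᵢ + g(bᴿᵢ)²/2` are the same in every cell. -/
theorem stmt_3 (g η₀ : ℝ) (bL bR : ℕ → ℝ) (R : ℕ → ℝ)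
    (hR0 : R 0 = 0)
    (hRrec : ∀ i : ℕ,
      R (i + 1) = R i + g * η₀ * (bL i - bR i) - g * ((bL i) ^ 2 - (bR i) ^ 2) / 2
        + g * η₀ * (bR (i + 1) - bL i) - g * ((bR (i + 1)) ^ 2 - (bL i) ^ 2) / 2)
    (K : ℕ → ℝ)
    (hK : ∀ i : ℕ,
      K i = R i + g * η₀ ^ 2 / 2 - g * η₀ * bR i + g * (bR i) ^ 2 / 2) :
    ∀ i : ℕ, K i = K 0 :=
  stmt_3_general g η₀ bL bR R hRrec K hK
end

section
/- Let q₀, g ∈ ℝ, let h, b : ℝ → ℝ be differentiable at a point x, and assume h(x) ≠ 0. Then the derivative of the momentum flux plus the bathymetry source equals h times the derivative of the energy-type quantity Υ: deriv(fun x ↦ q₀²/h(x) + g·h(x)²/2)(x) + g·h(x)·deriv b(x) = h(x) · deriv(fun x ↦ q₀²/(2·h(x)²) + g·(h(x) + b(x)))(x). -/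
/-! Differentiating `Υ` gives `Υ' = -(q₀²/h³) h' + g (h' + b')`, and multiplying by `h` yields
`(g h - q₀²/h²) h' + g h b'`, which is the derivative of the momentum flux plus the source term. -/

section

variable {𝕜 : Type*} [RCLike 𝕜] {h b : 𝕜 → 𝕜} {h' b' x : 𝕜}

theorem hasDerivAt_momentumFlux (q₀ g : 𝕜) (hh : HasDerivAt h h' x) (hx : h x ≠ 0) :
    HasDerivAt (fun y => q₀ ^ 2 / h y + g * (h y) ^ 2 / 2) ((g * h x - q₀ ^ 2 / (h x) ^ 2) * h') x :=
  (((hasDerivAt_const x (q₀ ^ 2)).div hh hx).add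
    (((hh.pow 2).const_mul g).div_const 2)).congr_deriv (by field_simp; ring)

theorem hasDerivAt_bernoulliHead (q₀ g : 𝕜) (hh : HasDerivAt h h' x) (hb : HasDerivAt b b' x)
    (hx : h x ≠ 0) :
    HasDerivAt (fun y => q₀ ^ 2 / (2 * (h y) ^ 2) + g * (h y + b y))
      (-(q₀ ^ 2 / (h x) ^ 3) * h' + g * (h' + b')) x :=
  (((hasDerivAt_const x (q₀ ^ 2)).div ((hh.pow 2).const_mul 2) (by simpa using hx)).add
    ((hh.add hb).const_mul g)).congr_deriv (by simp only [Pi.pow_apply]; field_simp; ring)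

end

/-- For differentiable `h`, `b` with `h x ≠ 0`, the derivative of the momentum flux plus the
bathymetry source equals `h` times the derivative of the energy-type quantity
`Υ = q₀²/(2h²) + g(h + b)`. -/
theorem stmt_4 (q₀ g : ℝ) (h b : ℝ → ℝ) (x : ℝ)
    (hh : DifferentiableAt ℝ h x) (hb : DifferentiableAt ℝ b x) (hx : h x ≠ 0) :
    deriv (fun y => q₀ ^ 2 / h y + g * (h y) ^ 2 / 2) x + g * h x * deriv b x
      = h x * deriv (fun y => q₀ ^ 2 / (2 * (h y) ^ 2) + g * (h y + b y)) x := by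
  rw [(hasDerivAt_momentumFlux q₀ g hh.hasDerivAt hx).deriv,
    (hasDerivAt_bernoulliHead q₀ g hh.hasDerivAt hb.hasDerivAt hx).deriv]
  field_simp
  ring
end

section
/- Let q₀, g ∈ ℝ, let I ⊆ ℝ be an open interval, and let h, b : ℝ → ℝ be differentiable on I with h(x) > 0 for all x ∈ I. If for every x ∈ I the steady momentum balance deriv(fun x ↦ q₀²/h(x) + g·h(x)²/2)(x) + g·h(x)·deriv b(x) = 0 holds, then the function Υ(x) := q₀²/(2·h(x)²) + g·(h(x) + b(x)) is constant on I. -/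
/-!
Writing `Υ = q₀²/(2h²) + g(h + b)`, the chain rule gives
`∂ₓ(q₀²/h + g h²/2) + g h ∂ₓb = h ∂ₓΥ`. Hence the momentum balance forces `∂ₓΥ = 0` wherever
`h > 0`, and `Υ` is constant on the (connected) interval.
-/

namespace ShallowWater

noncomputable def momentumFlux (q₀ g : ℝ) (h : ℝ → ℝ) : ℝ → ℝ :=
  fun y => q₀ ^ 2 / h y + g * (h y) ^ 2 / 2

noncomputable def energy (q₀ g : ℝ) (h b : ℝ → ℝ) : ℝ → ℝ :=
  fun y => q₀ ^ 2 / (2 * (h y) ^ 2) + g * (h y + b y)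

variable {q₀ g x h' b' : ℝ} {h b : ℝ → ℝ}

theorem hasDerivAt_momentumFlux (hh : HasDerivAt h h' x) (hx : h x ≠ 0) :
    HasDerivAt (momentumFlux q₀ g h) (-q₀ ^ 2 * h' / h x ^ 2 + g * h x * h') x := by
  refine (((hasDerivAt_const x (q₀ ^ 2)).fun_div hh hx).fun_add
    (((hh.fun_pow 2).const_mul g).div_const 2)).congr_deriv ?_
  push_cast
  ring

theorem hasDerivAt_energy (hh : HasDerivAt h h' x) (hb : HasDerivAt b b' x) (hx : h x ≠ 0) :
    HasDerivAt (energy q₀ g h b) (-q₀ ^ 2 * h' / h x ^ 3 + g * (h' + b')) x := by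
  refine (((hasDerivAt_const x (q₀ ^ 2)).fun_div ((hh.fun_pow 2).const_mul 2)
    (by positivity)).fun_add ((hh.fun_add hb).const_mul g)).congr_deriv ?_
  field_simp
  ring

theorem deriv_momentumFlux_add_source (hh : DifferentiableAt ℝ h x)
    (hb : DifferentiableAt ℝ b x) (hx : h x ≠ 0) :
    deriv (momentumFlux q₀ g h) x + g * h x * deriv b x = h x * deriv (energy q₀ g h b) x := by
  rw [(hasDerivAt_momentumFlux hh.hasDerivAt hx).deriv,
    (hasDerivAt_energy hh.hasDerivAt hb.hasDerivAt hx).deriv]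
  field_simp
  ring

end ShallowWater

open ShallowWater

/-- On an open interval where `h` and `b` are differentiable and `h > 0`, if the frictionless
steady momentum balance `∂ₓ(q₀²/h + g h²/2) + g h ∂ₓ b = 0` holds everywhere, then
`Υ = q₀²/(2h²) + g(h + b)` is constant on the interval. -/
theorem stmt_5 (q₀ g : ℝ) (a₁ a₂ : ℝ) (h b : ℝ → ℝ)
    (hh : ∀ x ∈ Set.Ioo a₁ a₂, DifferentiableAt ℝ h x)
    (hb : ∀ x ∈ Set.Ioo a₁ a₂, DifferentiableAt ℝ b x)
    (hpos : ∀ x ∈ Set.Ioo a₁ a₂, 0 < h x)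
    (hbal : ∀ x ∈ Set.Ioo a₁ a₂,
      deriv (fun y => q₀ ^ 2 / h y + g * (h y) ^ 2 / 2) x + g * h x * deriv b x = 0) :
    ∀ x ∈ Set.Ioo a₁ a₂, ∀ y ∈ Set.Ioo a₁ a₂,
      q₀ ^ 2 / (2 * (h x) ^ 2) + g * (h x + b x)
        = q₀ ^ 2 / (2 * (h y) ^ 2) + g * (h y + b y) := by
  intro x hx y hy
  have hdiff : DifferentiableOn ℝ (energy q₀ g h b) (Set.Ioo a₁ a₂) := fun z hz =>
    (hasDerivAt_energy (hh z hz).hasDerivAt (hb z hz).hasDerivAt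
      (hpos z hz).ne').differentiableAt.differentiableWithinAt
  have hzero : (Set.Ioo a₁ a₂).EqOn (deriv (energy q₀ g h b)) 0 := fun z hz => by
    have hbalz : h z * deriv (energy q₀ g h b) z = 0 := by
      rw [← deriv_momentumFlux_add_source (hh z hz) (hb z hz) (hpos z hz).ne']
      exact hbal z hz
    exact (mul_eq_zero.mp hbalz).resolve_left (hpos z hz).ne'
  exact isOpen_Ioo.is_const_of_deriv_eq_zero isPreconnected_Ioo hdiff hzero hx hy
end

section
/- Let g > 0 and q, c ∈ ℝ with q ≠ 0 and 27·g·q⁴ < 8·c³. Then the equation q²/h + g·h²/2 = c has exactly two solutions with h > 0; that is, there exist h₁, h₂ with 0 < h₁ < h₂, q²/hᵢ + g·hᵢ²/2 = c for i = 1,2, and every h > 0 satisfying the equation equals h₁ or h₂. -/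
/-!
The flux `F(h) = q²/h + g h²/2` blows up at `0⁺` and at `+∞`, and at the critical depth
`s = (q²/g)^{1/3}` it equals `3/2 · g s²`; the determinant condition is exactly `(3 g s²)³ < (2c)³`,
i.e. `F(s) < c`. The intermediate value theorem then gives a root on each side of `s`.
Conversely, every root is a root of the cubic `g h³ - 2 c h + 2 q² = 0`, which has no quadratic
term, so three distinct roots would sum to zero and cannot all be positive.
-/

open Filter Set Topology

lemma add_add_eq_zero_of_cubic_eq_zero {R : Type*} [CommRing R] [IsDomain R] {a b d x y z : R}
    (ha : a ≠ 0) (hxy : x ≠ y) (hxz : x ≠ z) (hyz : y ≠ z) (hx : a * x ^ 3 + b * x + d = 0)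
    (hy : a * y ^ 3 + b * y + d = 0) (hz : a * z ^ 3 + b * z + d = 0) : x + y + z = 0 := by
  have hxy' : a * (x ^ 2 + x * y + y ^ 2) + b = 0 :=
    (mul_eq_zero.mp (by linear_combination hx - hy :
      (x - y) * (a * (x ^ 2 + x * y + y ^ 2) + b) = 0)).resolve_left (sub_ne_zero.mpr hxy)
  have hxz' : a * (x ^ 2 + x * z + z ^ 2) + b = 0 :=
    (mul_eq_zero.mp (by linear_combination hx - hz :
      (x - z) * (a * (x ^ 2 + x * z + z ^ 2) + b) = 0)).resolve_left (sub_ne_zero.mpr hxz)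
  have : (y - z) * a * (x + y + z) = 0 := by linear_combination hxy' - hxz'
  exact (mul_eq_zero.mp this).resolve_left (mul_ne_zero (sub_ne_zero.mpr hyz) ha)

noncomputable def momentumFlux (g q h : ℝ) : ℝ := q ^ 2 / h + g * h ^ 2 / 2

section MomentumFlux

variable {g q c m h : ℝ}

lemma continuousOn_momentumFlux : ContinuousOn (momentumFlux g q) (Ioi 0) :=
  (continuousOn_const.div continuousOn_id fun _ hx => ne_of_gt hx).add (by fun_prop)

lemma tendsto_momentumFlux_nhdsGT_zero (hq : q ≠ 0) :
    Tendsto (momentumFlux g q) (𝓝[>] 0) atTop := by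
  have hpole : Tendsto (fun h : ℝ => q ^ 2 / h) (𝓝[>] 0) atTop := by
    simpa only [div_eq_mul_inv] using tendsto_inv_nhdsGT_zero.const_mul_atTop (by positivity)
  have hquad : Tendsto (fun h : ℝ => g * h ^ 2 / 2) (𝓝[>] 0) (𝓝 0) := by
    simpa using ((continuous_const.mul (continuous_pow 2)).div_const 2 |>.tendsto (0 : ℝ)).mono_left
      nhdsWithin_le_nhds
  exact hpole.atTop_add hquad

lemma tendsto_momentumFlux_atTop (hg : 0 < g) : Tendsto (momentumFlux g q) atTop atTop := by
  have hquad : Tendsto (fun h : ℝ => g * h ^ 2 / 2) atTop atTop :=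
    ((tendsto_pow_atTop two_ne_zero).const_mul_atTop hg).atTop_div_const two_pos
  exact (tendsto_const_nhds.div_atTop tendsto_id).add_atTop hquad

lemma momentumFlux_eq_of_mul_pow_three_eq {s : ℝ} (hs : s ≠ 0) (hgs : g * s ^ 3 = q ^ 2) :
    momentumFlux g q s = 3 / 2 * g * s ^ 2 := by
  unfold momentumFlux
  rw [← hgs]
  field_simp
  ring

lemma exists_momentumFlux_lt (hg : 0 < g) (hq : q ≠ 0) (hdet : 27 * g * q ^ 4 < 8 * c ^ 3) :
    ∃ s, 0 < s ∧ momentumFlux g q s < c := by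
  set s := (q ^ 2 / g) ^ ((3 : ℕ)⁻¹ : ℝ)
  have hs : 0 < s := by positivity
  have hgs : g * s ^ 3 = q ^ 2 := by
    rw [Real.rpow_inv_natCast_pow (by positivity) three_ne_zero]
    field_simp
  refine ⟨s, hs, ?_⟩
  rw [momentumFlux_eq_of_mul_pow_three_eq hs.ne' hgs]
  have : (3 * g * s ^ 2) ^ 3 < (2 * c) ^ 3 := by
    calc (3 * g * s ^ 2) ^ 3 = 27 * g * (g * s ^ 3) ^ 2 := by ring
      _ = 27 * g * q ^ 4 := by rw [hgs]; ring
      _ < (2 * c) ^ 3 := by linarith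
  linarith [(Odd.pow_lt_pow (by decide : Odd 3)).mp this]

lemma exists_mem_Ioo_momentumFlux_eq (hq : q ≠ 0) (hm : 0 < m) (hfm : momentumFlux g q m < c) :
    ∃ h ∈ Ioo 0 m, momentumFlux g q h = c := by
  have hcont : Tendsto (momentumFlux g q) (𝓝[<] m) (𝓝 (momentumFlux g q m)) :=
    (continuousOn_momentumFlux.continuousAt (Ioi_mem_nhds hm)).tendsto.mono_left
      nhdsWithin_le_nhds
  exact isPreconnected_Ioo.intermediate_value_Ioi (le_principal_iff.mpr (Ioo_mem_nhdsLT hm))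
    (le_principal_iff.mpr (Ioo_mem_nhdsGT hm)) (continuousOn_momentumFlux.mono Ioo_subset_Ioi_self)
    hcont (tendsto_momentumFlux_nhdsGT_zero hq) hfm

lemma exists_mem_Ioi_momentumFlux_eq (hg : 0 < g) (hm : 0 < m) (hfm : momentumFlux g q m < c) :
    ∃ h ∈ Ioi m, momentumFlux g q h = c := by
  have hcont : Tendsto (momentumFlux g q) (𝓝[>] m) (𝓝 (momentumFlux g q m)) :=
    (continuousOn_momentumFlux.continuousAt (Ioi_mem_nhds hm)).tendsto.mono_left
      nhdsWithin_le_nhds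
  exact isPreconnected_Ioi.intermediate_value_Ioi (le_principal_iff.mpr self_mem_nhdsWithin)
    (le_principal_iff.mpr (Ioi_mem_atTop m)) (continuousOn_momentumFlux.mono (Ioi_subset_Ioi hm.le))
    hcont (tendsto_momentumFlux_atTop hg) hfm

lemma cubic_eq_zero_of_momentumFlux_eq (hh : h ≠ 0) (hf : momentumFlux g q h = c) :
    g * h ^ 3 + -2 * c * h + 2 * q ^ 2 = 0 := by
  unfold momentumFlux at hf
  field_simp at hf
  linear_combination hf

lemma eq_or_eq_of_momentumFlux_eq {h₁ h₂ : ℝ} (hg : 0 < g) (h₁pos : 0 < h₁)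
    (h₂pos : 0 < h₂) (hpos : 0 < h) (h₁₂ : h₁ ≠ h₂) (hf₁ : momentumFlux g q h₁ = c)
    (hf₂ : momentumFlux g q h₂ = c) (hf : momentumFlux g q h = c) : h = h₁ ∨ h = h₂ := by
  by_contra! hne
  have := add_add_eq_zero_of_cubic_eq_zero hg.ne' h₁₂ (Ne.symm hne.1) (Ne.symm hne.2)
    (cubic_eq_zero_of_momentumFlux_eq h₁pos.ne' hf₁)
    (cubic_eq_zero_of_momentumFlux_eq h₂pos.ne' hf₂) (cubic_eq_zero_of_momentumFlux_eq hpos.ne' hf)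
  linarith

end MomentumFlux

/-- Under the determinant condition `27 g q⁴ < 8 c³` with `q ≠ 0`, the equation
`q²/h + g h²/2 = c` has exactly two positive solutions (subcritical and supercritical). -/
theorem stmt_10 (g q c : ℝ) (hg : 0 < g) (hq : q ≠ 0)
    (hdet : 27 * g * q ^ 4 < 8 * c ^ 3) :
    ∃ h₁ h₂ : ℝ, 0 < h₁ ∧ h₁ < h₂ ∧
      q ^ 2 / h₁ + g * h₁ ^ 2 / 2 = c ∧
      q ^ 2 / h₂ + g * h₂ ^ 2 / 2 = c ∧
      ∀ h : ℝ, 0 < h → q ^ 2 / h + g * h ^ 2 / 2 = c → h = h₁ ∨ h = h₂ := by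
  obtain ⟨m, hm, hfm⟩ := exists_momentumFlux_lt hg hq hdet
  obtain ⟨h₁, ⟨h₁pos, h₁m⟩, hf₁⟩ := exists_mem_Ioo_momentumFlux_eq hq hm hfm
  obtain ⟨h₂, mh₂, hf₂⟩ := exists_mem_Ioi_momentumFlux_eq hg hm hfm
  have h₁₂ : h₁ < h₂ := h₁m.trans mh₂
  exact ⟨h₁, h₂, h₁pos, h₁₂, hf₁, hf₂, fun h hpos hf =>
    eq_or_eq_of_momentumFlux_eq hg h₁pos (h₁pos.trans h₁₂) hpos h₁₂.ne hf₁ hf₂ hf⟩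
end
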